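/- Let γ : (0,∞) → ℝ² be the curve γ(t) = (t cos(e^{1/t}), t sin(e^{1/t})), and let Q(t) = cross(γ′(t), γ′′(t))/‖γ′(t)‖³ with cross(u,w) = u₁w₂ − u₂w₁. Then the function ℝ → ℝ defined by t ↦ Q′(t) − 1/t² for t > 0 and by 0 for t ≤ 0 is infinitely differentiable. -/

import Mathlib

/-- The spiral `γ(t) = (t cos(e^{1/t}), t sin(e^{1/t}))`. -/
noncomputable def spiral : ℝ → ℝ × ℝ :=
  fun t => (t * Real.cos (Real.exp (1 / t)), t * Real.sin (Real.exp (1 / t)))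

/-- The planar cross product `cross(u, w) = u₁w₂ - u₂w₁`. -/
def planarCross (u w : ℝ × ℝ) : ℝ := u.1 * w.2 - u.2 * w.1

/-- The Euclidean norm on `ℝ²`. -/
noncomputable def euclNorm (u : ℝ × ℝ) : ℝ := Real.sqrt (u.1 ^ 2 + u.2 ^ 2)

/-- The signed curvature density `Q(t) = cross(γ'(t), γ''(t)) / ‖γ'(t)‖³`. -/
noncomputable def spiralQ (t : ℝ) : ℝ :=
  planarCross (deriv spiral t) (deriv (deriv spiral) t) / (euclNorm (deriv spiral t)) ^ 3

/-!
For `t > 0` put `E = e^{1/t}` and `A = e^{-2/t} = E⁻²`. Then `γ'` has squared length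
`(E/t)² (1 + w)` with `w = t² A`, and `cross(γ', γ'') = E (t - E²) / t⁴`, so
`Q = (t A - 1) / (t (1 + w)^{3/2})`. Rationalising `1 - (1 + w)^{-3/2}` shows that
`Q + 1/t = A (1 + t (3 + 3w + w²) / (1 + s³)) / s³` with `s = √(1 + w)`. Since `A` is the
flat function `expNegInvGlue (t/2)`, the right-hand side, extended by `0` to `t ≤ 0`, is smooth
on `ℝ`; its derivative is the function of the theorem.
-/

open Real Set Topology

open scoped ContDiff

lemma deriv_eq_zero_of_eqOn_Iic {f : ℝ → ℝ} {a x : ℝ} (hf : EqOn f 0 (Iic a))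
    (hfx : DifferentiableAt ℝ f x) (hx : x ≤ a) : deriv f x = 0 := by
  have hzero : HasDerivWithinAt f 0 (Iic a) x :=
    (hasDerivWithinAt_const x (Iic a) 0).congr (fun y hy => hf hy) (hf hx)
  exact (uniqueDiffOn_Iic a x hx).eq_deriv _ hfx.hasDerivAt.hasDerivWithinAt hzero

lemma div_add_one_div_eq_of_sq_eq {t A w s : ℝ} (ht : t ≠ 0) (hs : 0 < s) (hw : w = t ^ 2 * A)
    (hs2 : s ^ 2 = 1 + w) :
    (t * A - 1) / (t * s ^ 3) + 1 / t = A * (1 + t * (3 + 3 * w + w ^ 2) / (1 + s ^ 3)) / s ^ 3 := by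
  have : s ^ 6 - 1 = w * (3 + 3 * w + w ^ 2) := by
    linear_combination (s ^ 4 + s ^ 2 * (1 + w) + (1 + w) ^ 2) * hs2
  field_simp
  linear_combination this + (3 + 3 * w + w ^ 2) * hw

noncomputable def spiralVelocity (t : ℝ) : ℝ × ℝ :=
  (cos (exp (1 / t)) + exp (1 / t) * sin (exp (1 / t)) / t,
   sin (exp (1 / t)) - exp (1 / t) * cos (exp (1 / t)) / t)

noncomputable def spiralAcceleration (t : ℝ) : ℝ × ℝ :=
  (-(exp (1 / t) * (sin (exp (1 / t)) + exp (1 / t) * cos (exp (1 / t)))) / t ^ 3,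
   exp (1 / t) * (cos (exp (1 / t)) - exp (1 / t) * sin (exp (1 / t))) / t ^ 3)

lemma hasDerivAt_exp_one_div {t : ℝ} (ht : t ≠ 0) :
    HasDerivAt (fun s => exp (1 / s)) (-(exp (1 / t) / t ^ 2)) t := by
  have hinv : HasDerivAt (fun s : ℝ => 1 / s) (-(t ^ 2)⁻¹) t := by
    simpa only [one_div] using hasDerivAt_inv ht
  exact ((hasDerivAt_exp (1 / t)).comp t hinv).congr_deriv (by ring)

lemma hasDerivAt_spiral {t : ℝ} (ht : t ≠ 0) : HasDerivAt spiral (spiralVelocity t) t := by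
  have hE := hasDerivAt_exp_one_div ht
  refine (((hasDerivAt_id t).mul ((hasDerivAt_cos _).comp t hE)).prodMk
    ((hasDerivAt_id t).mul ((hasDerivAt_sin _).comp t hE))).congr_deriv ?_
  simp only [spiralVelocity, id_eq, Function.comp_apply, Prod.mk.injEq]
  constructor
  · field_simp
  · field_simp; ring

lemma hasDerivAt_spiralVelocity {t : ℝ} (ht : t ≠ 0) :
    HasDerivAt spiralVelocity (spiralAcceleration t) t := by
  have hE := hasDerivAt_exp_one_div ht
  have hcos := (hasDerivAt_cos _).comp t hE
  have hsin := (hasDerivAt_sin _).comp t hE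
  refine ((hcos.add ((hE.mul hsin).div (hasDerivAt_id t) ht)).prodMk
    (hsin.sub ((hE.mul hcos).div (hasDerivAt_id t) ht))).congr_deriv ?_
  simp only [spiralAcceleration, id_eq, Function.comp_apply, Pi.mul_apply, Prod.mk.injEq]
  constructor <;> (field_simp; ring)

lemma deriv_spiral {t : ℝ} (ht : t ≠ 0) : deriv spiral t = spiralVelocity t :=
  (hasDerivAt_spiral ht).deriv

lemma deriv_deriv_spiral {t : ℝ} (ht : t ≠ 0) :
    deriv (deriv spiral) t = spiralAcceleration t := by
  have hev : deriv spiral =ᶠ[𝓝 t] spiralVelocity := by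
    filter_upwards [isOpen_compl_singleton.mem_nhds ht] with s hs
    exact deriv_spiral hs
  rw [hev.deriv_eq, (hasDerivAt_spiralVelocity ht).deriv]

lemma planarCross_spiralVelocity_spiralAcceleration {t : ℝ} (ht : t ≠ 0) :
    planarCross (spiralVelocity t) (spiralAcceleration t)
      = exp (1 / t) * (t - exp (1 / t) ^ 2) / t ^ 4 := by
  simp only [planarCross, spiralVelocity, spiralAcceleration]
  field_simp
  linear_combination (t - exp (1 / t) ^ 2) * sin_sq_add_cos_sq (exp (1 / t))

lemma spiralVelocity_normSq {t : ℝ} (ht : t ≠ 0) :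
    (spiralVelocity t).1 ^ 2 + (spiralVelocity t).2 ^ 2 = 1 + exp (1 / t) ^ 2 / t ^ 2 := by
  simp only [spiralVelocity]
  field_simp
  linear_combination (t ^ 2 + exp (1 / t) ^ 2) * sin_sq_add_cos_sq (exp (1 / t))

lemma expNegInvGlue_half_mul_exp_one_div_sq {t : ℝ} (ht : 0 < t) :
    expNegInvGlue (t / 2) * exp (1 / t) ^ 2 = 1 := by
  rw [expNegInvGlue, if_neg (by linarith), ← exp_nat_mul, ← exp_add, exp_eq_one_iff]
  field_simp
  ring

noncomputable def spiralWeight (t : ℝ) : ℝ := t ^ 2 * expNegInvGlue (t / 2)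

lemma one_add_spiralWeight_pos (t : ℝ) : 0 < 1 + spiralWeight t := by
  have := mul_nonneg (sq_nonneg t) (expNegInvGlue.nonneg (t / 2))
  rw [spiralWeight]
  linarith

noncomputable def spiralQAddInv (t : ℝ) : ℝ :=
  expNegInvGlue (t / 2) *
    (1 + t * (3 + 3 * spiralWeight t + spiralWeight t ^ 2) / (1 + √(1 + spiralWeight t) ^ 3)) /
      √(1 + spiralWeight t) ^ 3

lemma contDiff_spiralQAddInv : ContDiff ℝ ∞ spiralQAddInv := by
  have hA : ContDiff ℝ ∞ fun t : ℝ => expNegInvGlue (t / 2) :=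
    expNegInvGlue.contDiff.comp (contDiff_id.div_const 2)
  have hw : ContDiff ℝ ∞ spiralWeight := (contDiff_id.pow 2).mul hA
  have hs : ContDiff ℝ ∞ fun t => √(1 + spiralWeight t) ^ 3 :=
    ((contDiff_const.add hw).sqrt fun t => (one_add_spiralWeight_pos t).ne').pow 3
  have hs_pos : ∀ t, 0 < √(1 + spiralWeight t) ^ 3 := fun t => by
    have := sqrt_pos.2 (one_add_spiralWeight_pos t); positivity
  refine (hA.mul (contDiff_const.add (ContDiff.div ?_ (contDiff_const.add hs) fun t => ?_))).div
    hs fun t => (hs_pos t).ne'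
  · exact contDiff_id.mul ((contDiff_const.add (contDiff_const.mul hw)).add (hw.pow 2))
  · have := hs_pos t; positivity

lemma differentiable_spiralQAddInv : Differentiable ℝ spiralQAddInv :=
  contDiff_spiralQAddInv.differentiable (by simp)

lemma spiralQAddInv_of_nonpos {t : ℝ} (ht : t ≤ 0) : spiralQAddInv t = 0 := by
  rw [spiralQAddInv, expNegInvGlue.zero_of_nonpos (by linarith), zero_mul, zero_div]

lemma spiralQ_of_pos {t : ℝ} (ht : 0 < t) :
    spiralQ t = (t * expNegInvGlue (t / 2) - 1) / (t * √(1 + spiralWeight t) ^ 3) := by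
  rw [spiralQ, deriv_spiral ht.ne', deriv_deriv_spiral ht.ne',
    planarCross_spiralVelocity_spiralAcceleration ht.ne', euclNorm, spiralVelocity_normSq ht.ne']
  have hAE := expNegInvGlue_half_mul_exp_one_div_sq ht
  have hE := exp_pos (1 / t)
  have hs : 0 < √(1 + spiralWeight t) := sqrt_pos.2 (one_add_spiralWeight_pos t)
  have hs2 : √(1 + spiralWeight t) ^ 2 = 1 + t ^ 2 * expNegInvGlue (t / 2) :=
    sq_sqrt (one_add_spiralWeight_pos t).le
  generalize exp (1 / t) = E at *
  generalize expNegInvGlue (t / 2) = A at *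
  generalize √(1 + spiralWeight t) = s at *
  have hnorm : √(1 + E ^ 2 / t ^ 2) = E * s / t := by
    rw [← sqrt_sq (by positivity : 0 ≤ E * s / t)]
    congr 1
    field_simp
    linear_combination -E ^ 2 * hs2 - t ^ 2 * hAE
  rw [hnorm]
  field_simp
  linear_combination -t * hAE

lemma spiralQ_add_one_div {t : ℝ} (ht : 0 < t) : spiralQ t + 1 / t = spiralQAddInv t := by
  rw [spiralQ_of_pos ht, spiralQAddInv]
  exact div_add_one_div_eq_of_sq_eq ht.ne' (sqrt_pos.2 (one_add_spiralWeight_pos t)) rfl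
    (sq_sqrt (one_add_spiralWeight_pos t).le)

lemma deriv_spiralQ {t : ℝ} (ht : 0 < t) :
    deriv spiralQ t = deriv spiralQAddInv t + 1 / t ^ 2 := by
  have hev : spiralQ =ᶠ[𝓝 t] fun s => spiralQAddInv s - s⁻¹ := by
    filter_upwards [Ioi_mem_nhds ht] with s hs
    rw [← spiralQ_add_one_div hs, one_div, add_sub_cancel_right]
  rw [hev.deriv_eq, (differentiable_spiralQAddInv t).hasDerivAt.fun_sub (hasDerivAt_inv ht.ne')
    |>.deriv]
  ring

/-- The function equal to `Q'(t) - 1/t²` for `t > 0` and to `0` for `t ≤ 0` is infinitely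
differentiable. -/
theorem stmt_9 (G : ℝ → ℝ)
    (hG : ∀ t : ℝ, G t = if 0 < t then deriv spiralQ t - 1 / t ^ 2 else 0) :
    ContDiff ℝ (⊤ : ℕ∞) G := by
  have hG_eq : G = deriv spiralQAddInv := by
    funext t
    rw [hG t]
    split_ifs with ht
    · rw [deriv_spiralQ ht, add_sub_cancel_right]
    · exact (deriv_eq_zero_of_eqOn_Iic (fun s hs => spiralQAddInv_of_nonpos hs)
        (differentiable_spiralQAddInv t) (not_lt.1 ht)).symm
  rw [hG_eq]
  exact (contDiff_infty_iff_deriv.1 contDiff_spiralQAddInv).2
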